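/- arXiv:2012.06783 — 2 statements merged into one kernel-verified Lean document; each statement's English description precedes it below -/
import Mathlib

section
/- Let X and Y be real Banach spaces, let T : Y → X be a bounded linear operator that is not compact, and suppose X has a Schauder basis (e_n)_{n∈ℕ} and Y has a Schauder basis (y_n)_{n∈ℕ}. Then there exist a semi-normalized block basic sequence (u_j)_{j∈ℕ} in X with respect to (e_n) and a semi-normalized block basic sequence (v_j)_{j∈ℕ} in Y with respect to (y_n) such that (u_j) is equivalent to (T v_j). -/
open scoped BigOperators

/-- `e` is a Schauder basis of `X`: every vector has a unique expansion as a norm-convergent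
series `∑ n, a n • e n` (partial sums over `Finset.range N`). -/
def IsSchauderBasis {X : Type*} [NormedAddCommGroup X] [NormedSpace ℝ X] (e : ℕ → X) : Prop :=
  ∀ x : X, ∃! a : ℕ → ℝ,
    Filter.Tendsto (fun N => ∑ n ∈ Finset.range N, a n • e n) Filter.atTop (nhds x)

/-- `u` is a block basic sequence with respect to `e`. -/
def IsBlockBasic {X : Type*} [NormedAddCommGroup X] [NormedSpace ℝ X]
    (e : ℕ → X) (u : ℕ → X) : Prop :=
  ∃ (A : ℕ → Finset ℕ) (a : ℕ → ℝ),
    (∀ j, (A j).Nonempty) ∧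
    (∀ j, ∀ m ∈ A j, ∀ k ∈ A (j + 1), m < k) ∧
    (∀ j, u j = ∑ n ∈ A j, a n • e n)

/-- A sequence is semi-normalized if its norms are bounded away from zero and from infinity. -/
def SemiNormalized {X : Type*} [NormedAddCommGroup X] (u : ℕ → X) : Prop :=
  ∃ c C : ℝ, 0 < c ∧ ∀ j, c ≤ ‖u j‖ ∧ ‖u j‖ ≤ C

/-- Two sequences (possibly in different spaces) are equivalent. -/
def SeqEquiv {X Y : Type*} [NormedAddCommGroup X] [NormedSpace ℝ X]
    [NormedAddCommGroup Y] [NormedSpace ℝ Y] (u : ℕ → X) (w : ℕ → Y) : Prop :=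
  ∃ C : ℝ, 1 ≤ C ∧ ∀ (a : ℕ → ℝ) (s : Finset ℕ),
    C⁻¹ * ‖∑ j ∈ s, a j • w j‖ ≤ ‖∑ j ∈ s, a j • u j‖ ∧
    ‖∑ j ∈ s, a j • u j‖ ≤ C * ‖∑ j ∈ s, a j • w j‖

/-- A bounded linear operator is compact if the image of the closed unit ball is
relatively compact. -/
def CompactOp {X Y : Type*} [NormedAddCommGroup X] [NormedSpace ℝ X]
    [NormedAddCommGroup Y] [NormedSpace ℝ Y] (T : Y →L[ℝ] X) : Prop :=
  IsCompact (closure (T '' Metric.closedBall 0 1))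

/-- `e` is an unconditional basis of `X`. -/
def IsUncondBasis {X : Type*} [NormedAddCommGroup X] [NormedSpace ℝ X] (e : ℕ → X) : Prop :=
  (∀ n, e n ≠ 0) ∧ ∀ x : X, ∃! a : ℕ → ℝ, HasSum (fun n => a n • e n) x

/-- `u` is disjointly finitely supported with respect to `e`. -/
def DisjSupported {X : Type*} [NormedAddCommGroup X] [NormedSpace ℝ X]
    (e : ℕ → X) (u : ℕ → X) : Prop :=
  ∃ A : ℕ → Finset ℕ, Pairwise (Function.onFun Disjoint A) ∧
    ∀ j, u j ∈ Submodule.span ℝ (e '' (A j : Set ℕ))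

/-- The basis `e` satisfies a lower `q`-estimate. -/
def LowerEstimate {X : Type*} [NormedAddCommGroup X] [NormedSpace ℝ X]
    (e : ℕ → X) (q : ℝ) : Prop :=
  ∃ C : ℝ, 0 < C ∧ ∀ (m : ℕ) (f : Fin m → X) (A : Fin m → Finset ℕ),
    Pairwise (Function.onFun Disjoint A) →
    (∀ i, f i ∈ Submodule.span ℝ (e '' (A i : Set ℕ))) →
    (∑ i, ‖f i‖ ^ q) ^ (1 / q) ≤ C * ‖∑ i, f i‖

/-- The basis `e` satisfies an upper `q`-estimate. -/
def UpperEstimate {X : Type*} [NormedAddCommGroup X] [NormedSpace ℝ X]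
    (e : ℕ → X) (q : ℝ) : Prop :=
  ∃ C : ℝ, 0 < C ∧ ∀ (m : ℕ) (f : Fin m → X) (A : Fin m → Finset ℕ),
    Pairwise (Function.onFun Disjoint A) →
    (∀ i, f i ∈ Submodule.span ℝ (e '' (A i : Set ℕ))) →
    ‖∑ i, f i‖ ≤ C * (∑ i, ‖f i‖ ^ q) ^ (1 / q)

/-- `u` is equivalent to the canonical basis of `ℓ_q`. -/
def EquivCanonLq {X : Type*} [NormedAddCommGroup X] [NormedSpace ℝ X]
    (u : ℕ → X) (q : ℝ) : Prop :=
  ∃ C : ℝ, 1 ≤ C ∧ ∀ (a : ℕ → ℝ) (s : Finset ℕ),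
    C⁻¹ * (∑ j ∈ s, |a j| ^ q) ^ (1 / q) ≤ ‖∑ j ∈ s, a j • u j‖ ∧
    ‖∑ j ∈ s, a j • u j‖ ≤ C * (∑ j ∈ s, |a j| ^ q) ^ (1 / q)

/-- `Z` contains an isomorphic copy of `ℓ_q`: there is a bounded linear map `J : ℓ_q → Z`
which is bounded below. -/
def ContainsLp (Z : Type*) [NormedAddCommGroup Z] [NormedSpace ℝ Z] (q : ℝ) : Prop :=
  ∃ (J : lp (fun _ : ℕ => ℝ) (ENNReal.ofReal q) →ₗ[ℝ] Z) (C c : ℝ), 0 < c ∧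
    ∀ f, ‖J f‖ ≤ C * ‖f‖ ∧ c * ‖f‖ ≤ ‖J f‖

/-- `T` is strictly singular: it is bounded below on no infinite-dimensional subspace. -/
def StrictlySingular {X Y : Type*} [NormedAddCommGroup X] [NormedSpace ℝ X]
    [NormedAddCommGroup Y] [NormedSpace ℝ Y] (T : Y →L[ℝ] X) : Prop :=
  ∀ (Z : Submodule ℝ Y) (c : ℝ), 0 < c → (∀ z ∈ Z, c * ‖z‖ ≤ ‖T z‖) →
    FiniteDimensional ℝ Z

/-- A finite family of Banach spaces is splitting for unconditional bases. -/
def SplittingFamily {ι : Type*} [Fintype ι] (Z : ι → Type*)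
    [∀ i, NormedAddCommGroup (Z i)] [∀ i, NormedSpace ℝ (Z i)] : Prop :=
  ∀ w : ℕ → (∀ i, Z i), IsUncondBasis w →
    ∃ N : ι → Set ℕ, Pairwise (Function.onFun Disjoint N) ∧ (⋃ i, N i) = Set.univ ∧
      ∀ i, Nonempty ((Submodule.span ℝ (w '' N i)).topologicalClosure ≃L[ℝ] Z i)

/-- A pair of Banach spaces is splitting for unconditional bases. -/
def SplittingPair (U V : Type*) [NormedAddCommGroup U] [NormedSpace ℝ U]
    [NormedAddCommGroup V] [NormedSpace ℝ V] : Prop :=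
  ∀ w : ℕ → U × V, IsUncondBasis w →
    ∃ N₁ N₂ : Set ℕ, Disjoint N₁ N₂ ∧ N₁ ∪ N₂ = Set.univ ∧
      Nonempty ((Submodule.span ℝ (w '' N₁)).topologicalClosure ≃L[ℝ] U) ∧
      Nonempty ((Submodule.span ℝ (w '' N₂)).topologicalClosure ≃L[ℝ] V)

/-- `U` has a unique, up to equivalence and permutation, unconditional basis. -/
def HasUTAPBasis (U : Type*) [NormedAddCommGroup U] [NormedSpace ℝ U] : Prop :=
  ∃ e : ℕ → U, IsUncondBasis e ∧ SemiNormalized e ∧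
    ∀ f : ℕ → U, IsUncondBasis f → SemiNormalized f →
      ∃ π : Equiv.Perm ℕ, SeqEquiv (fun n => f (π n)) e

/-- `y` is a subsymmetric basic sequence: semi-normalized, an unconditional basis of its
closed linear span, and equivalent to all of its subsequences. -/
def IsSubsymmetric {X : Type*} [NormedAddCommGroup X] [NormedSpace ℝ X] (y : ℕ → X) : Prop :=
  SemiNormalized y ∧ (∀ n, y n ≠ 0) ∧
  (∀ x : X, x ∈ (Submodule.span ℝ (Set.range y)).topologicalClosure →
    ∃! a : ℕ → ℝ, HasSum (fun n => a n • y n) x) ∧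
  ∀ k : ℕ → ℕ, StrictMono k → SeqEquiv (fun n => y (k n)) y

/-!
Since `T` is not compact, the image of the unit ball contains an `ε`-separated sequence `T wₖ`.
The coordinates of `wₖ` and of `T wₖ` are bounded, so along a subsequence all of them converge;
the differences `zₖ` of consecutive terms then satisfy `‖zₖ‖ ≤ 2` and `‖T zₖ‖ ≥ ε`, while all
their coordinates tend to `0`. A gliding hump run in both bases at once picks `z_{kⱼ}` that are,
up to summable errors, blocks `vⱼ` of `(yₙ)`, while `T z_{kⱼ}` are blocks `uⱼ` of `(eₙ)`. The
coefficient functionals of a block sequence bounded below are bounded by a multiple of the basis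
constant, so the small perturbation `(T vⱼ)` of `(uⱼ)` is equivalent to it.

The basis constant is finite because in a Banach space the coefficient functionals of a Schauder
basis are continuous: evaluation at `∞` is a continuous linear bijection onto `X` from the Banach
space of convergent partial-sum sequences, so its inverse is bounded by the open mapping theorem.
-/

open Filter Topology Finset
open scoped OnePoint

namespace IsSchauderBasis

variable {X : Type*} [NormedAddCommGroup X] [NormedSpace ℝ X] {e : ℕ → X}

theorem unique_of_tendsto (he : IsSchauderBasis e) {x : X} {a b : ℕ → ℝ}
    (ha : Tendsto (fun N => ∑ n ∈ range N, a n • e n) atTop (𝓝 x))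
    (hb : Tendsto (fun N => ∑ n ∈ range N, b n • e n) atTop (𝓝 x)) : a = b :=
  (he x).unique ha hb

noncomputable def coeff (he : IsSchauderBasis e) : X →ₗ[ℝ] ℕ → ℝ where
  toFun x := (he x).exists.choose
  map_add' x y := he.unique_of_tendsto (he (x + y)).exists.choose_spec <| by
    simpa only [Pi.add_apply, add_smul, sum_add_distrib] using
      (he x).exists.choose_spec.add (he y).exists.choose_spec
  map_smul' r x := he.unique_of_tendsto (he (r • x)).exists.choose_spec <| by
    simpa only [RingHom.id_apply, Pi.smul_apply, smul_eq_mul, mul_smul, ← smul_sum] using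
      (he x).exists.choose_spec.const_smul r

theorem tendsto_sum_coeff_smul (he : IsSchauderBasis e) (x : X) :
    Tendsto (fun N => ∑ n ∈ range N, he.coeff x n • e n) atTop (𝓝 x) :=
  (he x).exists.choose_spec

theorem coeff_eq_of_tendsto (he : IsSchauderBasis e) {x : X} {a : ℕ → ℝ}
    (ha : Tendsto (fun N => ∑ n ∈ range N, a n • e n) atTop (𝓝 x)) : he.coeff x = a :=
  he.unique_of_tendsto (he.tendsto_sum_coeff_smul x) ha

theorem coeff_basis (he : IsSchauderBasis e) (m : ℕ) : he.coeff (e m) = Pi.single m 1 := by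
  refine he.coeff_eq_of_tendsto (tendsto_const_nhds.congr' ?_)
  filter_upwards [eventually_gt_atTop m] with N hN
  rw [sum_eq_single_of_mem m (mem_range.2 hN) fun n _ hn => by simp [hn]]
  simp

theorem ne_zero (he : IsSchauderBasis e) (m : ℕ) : e m ≠ 0 := fun h => by
  simpa [h] using congrFun (he.coeff_basis m) m

variable (e) in
/-- Sequences of partial sums of series `∑ a n • e n`, extended to `∞ : OnePoint ℕ` by their
limit. -/
def partialSums : Submodule ℝ C(OnePoint ℕ, X) where
  carrier := {g | g (0 : ℕ) = 0 ∧ ∀ n : ℕ, g (n + 1 : ℕ) - g n ∈ ℝ ∙ e n}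
  add_mem' := by
    rintro g h ⟨hg0, hg⟩ ⟨hh0, hh⟩
    refine ⟨by simp [hg0, hh0], fun n => ?_⟩
    simpa [add_sub_add_comm] using add_mem (hg n) (hh n)
  zero_mem' := by simp
  smul_mem' := by
    rintro r g ⟨hg0, hg⟩
    exact ⟨by simp [hg0], fun n => by simpa [← smul_sub] using Submodule.smul_mem _ r (hg n)⟩

theorem isClosed_partialSums : IsClosed (partialSums e : Set C(OnePoint ℕ, X)) := by
  have hev : ∀ p : OnePoint ℕ, Continuous fun g : C(OnePoint ℕ, X) => g p :=
    fun p => (ContinuousMap.evalCLM ℝ p).continuous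
  refine (isClosed_eq (hev _) continuous_const).inter ?_
  show IsClosed {g : C(OnePoint ℕ, X) | ∀ n : ℕ, g (n + 1 : ℕ) - g n ∈ ℝ ∙ e n}
  rw [Set.ofPred_forall]
  exact isClosed_iInter fun n =>
    (Submodule.closed_of_finiteDimensional (ℝ ∙ e n)).preimage ((hev (n + 1 : ℕ)).sub (hev n))

instance [CompleteSpace X] : CompleteSpace (partialSums e) :=
  isClosed_partialSums.completeSpace_coe

theorem exists_eq_sum_of_mem_partialSums {g : C(OnePoint ℕ, X)} (hg : g ∈ partialSums e) :
    ∃ a : ℕ → ℝ, ∀ N : ℕ, g N = ∑ n ∈ range N, a n • e n := by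
  choose a ha using fun n => Submodule.mem_span_singleton.1 (hg.2 n)
  refine ⟨a, fun N => ?_⟩
  induction N with
  | zero => simpa using hg.1
  | succ N ih => rw [sum_range_succ, ← ih, ha, add_sub_cancel]

theorem apply_eq_sum_coeff (he : IsSchauderBasis e) {g : C(OnePoint ℕ, X)}
    (hg : g ∈ partialSums e) (N : ℕ) :
    g N = ∑ n ∈ range N, he.coeff (g ∞) n • e n := by
  obtain ⟨a, ha⟩ := exists_eq_sum_of_mem_partialSums hg
  have hlim := (OnePoint.continuous_iff_from_nat g).1 g.continuous
  rw [he.coeff_eq_of_tendsto (hlim.congr ha), ha]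

variable [CompleteSpace X]

noncomputable def limitEquiv (he : IsSchauderBasis e) : partialSums e ≃L[ℝ] X :=
  ContinuousLinearEquiv.ofBijective
    ((ContinuousMap.evalCLM ℝ ∞).comp (partialSums e).subtypeL)
    (by
      refine LinearMap.ker_eq_bot'.2 fun g hg => Subtype.ext <| ContinuousMap.ext fun p => ?_
      change (g : C(OnePoint ℕ, X)) ∞ = 0 at hg
      induction p using OnePoint.rec with
      | infty => exact hg
      | coe N => simp [he.apply_eq_sum_coeff g.2 N, hg])
    (by
      refine LinearMap.range_eq_top.2 fun x => ?_
      refine ⟨⟨OnePoint.continuousMapMkNat (fun N => ∑ n ∈ range N, he.coeff x n • e n) x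
        (he.tendsto_sum_coeff_smul x), ?_, fun n => ?_⟩, rfl⟩
      · exact sum_range_zero fun n => he.coeff x n • e n
      · change ∑ m ∈ range (n + 1), he.coeff x m • e m - ∑ m ∈ range n, he.coeff x m • e m ∈ _
        rw [sum_range_succ, add_sub_cancel_left]
        exact Submodule.smul_mem _ _ (Submodule.mem_span_singleton_self _))

theorem limitEquiv_symm_apply_coe (he : IsSchauderBasis e) (x : X) (N : ℕ) :
    (he.limitEquiv.symm x : C(OnePoint ℕ, X)) N = ∑ n ∈ range N, he.coeff x n • e n := by
  have hx : (he.limitEquiv.symm x : C(OnePoint ℕ, X)) ∞ = x := he.limitEquiv.apply_symm_apply x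
  rw [he.apply_eq_sum_coeff (he.limitEquiv.symm x).2, hx]

theorem continuous_coeff (he : IsSchauderBasis e) (n : ℕ) : Continuous fun x => he.coeff x n := by
  have hsum (N : ℕ) : Continuous fun x => ∑ m ∈ range N, he.coeff x m • e m := by
    simp_rw [← he.limitEquiv_symm_apply_coe]
    fun_prop
  refine (isClosedEmbedding_smul_left (he.ne_zero n)).continuous_iff.2 ?_
  convert (hsum (n + 1)).sub (hsum n) using 1
  ext x
  simp [sum_range_succ]

noncomputable def toSchauderBasis (he : IsSchauderBasis e) : SchauderBasis ℝ X where
  basis := e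
  coord n := { toLinearMap := (LinearMap.proj n).comp he.coeff, cont := he.continuous_coeff n }
  ortho i j := by
    change he.coeff (e j) i = _
    simp [he.coeff_basis, Pi.single_apply]
  expansion x := by
    rw [HasSum, SummationFilter.conditional_filter_eq_map_range, tendsto_map'_iff]
    exact he.tendsto_sum_coeff_smul x

end IsSchauderBasis

theorem SemiNormalized.of_norm_sub_le {X : Type*} [NormedAddCommGroup X] {u x : ℕ → X}
    {c C δ : ℝ} (hδ : δ < c)
    (hx : ∀ j, c ≤ ‖x j‖ ∧ ‖x j‖ ≤ C) (hux : ∀ j, ‖u j - x j‖ ≤ δ) : SemiNormalized u :=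
  ⟨c - δ, C + δ, sub_pos.2 hδ, fun j => by
    constructor <;>
      linarith [norm_sub_norm_le (x j) (u j), norm_sub_norm_le (u j) (x j),
        norm_sub_rev (u j) (x j), hx j, hux j]⟩

theorem sum_half_pow_add_two_le (s : Finset ℕ) : ∑ j ∈ s, (1 / 2 : ℝ) ^ (j + 2) ≤ 1 / 2 := by
  calc ∑ j ∈ s, (1 / 2 : ℝ) ^ (j + 2) = 1 / 4 * ∑ j ∈ s, (1 / 2 : ℝ) ^ j := by
        rw [mul_sum]
        exact sum_congr rfl fun j _ => by ring
    _ ≤ 1 / 4 * 2 := by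
        gcongr
        exact (summable_geometric_two.sum_le_tsum s fun _ _ => by positivity).trans_eq
          tsum_geometric_two
    _ = 1 / 2 := by norm_num

theorem seqEquiv_of_norm_sub_le {X : Type*} [NormedAddCommGroup X] [NormedSpace ℝ X]
    {u w : ℕ → X} {L : ℝ}
    (hu : ∀ (a : ℕ → ℝ) (s : Finset ℕ), ∀ j ∈ s, |a j| ≤ L * ‖∑ i ∈ s, a i • u i‖)
    (huw : ∀ j, L * ‖u j - w j‖ ≤ (1 / 2) ^ (j + 2)) : SeqEquiv u w := by
  refine ⟨2, one_le_two, fun a s => ?_⟩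
  set S := ∑ j ∈ s, a j • u j
  set W := ∑ j ∈ s, a j • w j
  have hSW : ‖S - W‖ ≤ ‖S‖ / 2 := by
    calc ‖S - W‖ = ‖∑ j ∈ s, a j • (u j - w j)‖ := by
          simp only [S, W, smul_sub, sum_sub_distrib]
      _ ≤ ∑ j ∈ s, |a j| * ‖u j - w j‖ := by
          simpa only [norm_smul, Real.norm_eq_abs] using norm_sum_le s fun j => a j • (u j - w j)
      _ ≤ ∑ j ∈ s, ‖S‖ * (1 / 2) ^ (j + 2) := sum_le_sum fun j hj => by
          nlinarith [hu a s j hj, huw j, norm_nonneg (u j - w j), norm_nonneg S]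
      _ ≤ ‖S‖ * (1 / 2) := by
          rw [← mul_sum]
          exact mul_le_mul_of_nonneg_left (sum_half_pow_add_two_le s) (norm_nonneg _)
      _ = ‖S‖ / 2 := by ring
  have h₁ := norm_sub_norm_le S W
  have h₂ := norm_sub_norm_le W S
  rw [norm_sub_rev] at h₂
  constructor <;> linarith [norm_nonneg S]

namespace SchauderBasis

section Field

variable {𝕜 X : Type*} [NontriviallyNormedField 𝕜] [NormedAddCommGroup X] [NormedSpace 𝕜 X]
  (b : SchauderBasis 𝕜 X)

noncomputable def blockProj (m n : ℕ) : X →L[𝕜] X := b.proj n - b.proj m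

theorem blockProj_apply {m n : ℕ} (h : m ≤ n) (x : X) :
    b.blockProj m n x = ∑ i ∈ Ico m n, b.coord i x • b i := by
  simp [blockProj, proj_apply, sum_Ico_eq_sub _ h]

theorem blockProj_blockProj {M : ℕ → ℕ} (hM : StrictMono M) (i j : ℕ) (x : X) :
    b.blockProj (M j) (M (j + 1)) (b.blockProj (M i) (M (i + 1)) x) =
      if i = j then b.blockProj (M i) (M (i + 1)) x else 0 := by
  have hle := hM.monotone
  simp only [blockProj, FunLike.coe_sub, Pi.sub_apply, map_sub, proj_comp]
  rcases lt_trichotomy i j with hij | rfl | hij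
  · have h₁ : M i ≤ M (i + 1) := hle (Nat.le_succ i)
    have h₂ : M (i + 1) ≤ M j := hle hij
    have h₃ : M j ≤ M (j + 1) := hle (Nat.le_succ j)
    simp [h₁.trans h₂, h₂.trans h₃, h₁.trans (h₂.trans h₃), *, hij.ne]
  · have h₁ : M i ≤ M (i + 1) := hle (Nat.le_succ i)
    simp [h₁]
  · have h₁ : M j ≤ M (j + 1) := hle (Nat.le_succ j)
    have h₂ : M (j + 1) ≤ M i := hle hij
    have h₃ : M i ≤ M (i + 1) := hle (Nat.le_succ i)
    simp [h₁.trans h₂, h₂.trans h₃, h₁.trans (h₂.trans h₃), *, hij.ne']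

theorem norm_blockProj_le {K : ℝ} (hK : ∀ n, ‖b.proj n‖ ≤ K) (m n : ℕ) :
    ‖b.blockProj m n‖ ≤ 2 * K := by
  rw [blockProj, two_mul]
  exact (norm_sub_le _ _).trans (add_le_add (hK n) (hK m))

theorem norm_smul_blockProj_le {K : ℝ} (hK : ∀ n, ‖b.proj n‖ ≤ K) {M : ℕ → ℕ}
    (hM : StrictMono M) (x : ℕ → X) (a : ℕ → 𝕜) {s : Finset ℕ} {j : ℕ} (hj : j ∈ s) :
    ‖a j • b.blockProj (M j) (M (j + 1)) (x j)‖ ≤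
      2 * K * ‖∑ i ∈ s, a i • b.blockProj (M i) (M (i + 1)) (x i)‖ := by
  have hpick : b.blockProj (M j) (M (j + 1)) (∑ i ∈ s, a i • b.blockProj (M i) (M (i + 1)) (x i))
      = a j • b.blockProj (M j) (M (j + 1)) (x j) := by
    simp [b.blockProj_blockProj hM, hj]
  rw [← hpick]
  exact (ContinuousLinearMap.le_opNorm _ _).trans
    (mul_le_mul_of_nonneg_right (b.norm_blockProj_le hK _ _) (norm_nonneg _))

theorem eventually_exists_norm_blockProj_sub_lt {x : ℕ → X}
    (hx : ∀ i, Tendsto (fun k => b.coord i (x k)) atTop (𝓝 0)) (m : ℕ) {η : ℝ} (hη : 0 < η) :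
    ∀ᶠ k in atTop, ∃ n, m < n ∧ ‖b.blockProj m n (x k) - x k‖ < η := by
  have hproj : Tendsto (fun k => b.proj m (x k)) atTop (𝓝 0) := by
    simpa [proj_apply] using tendsto_finsetSum (range m) fun i _ => (hx i).smul_const (b i)
  filter_upwards [hproj.eventually (Metric.ball_mem_nhds 0 (half_pos hη))] with k hk
  obtain ⟨n, hn, hmn⟩ := (((b.tendsto_proj (x k)).eventually
    (Metric.ball_mem_nhds (x k) (half_pos hη))).and (eventually_gt_atTop m)).exists
  refine ⟨n, hmn, ?_⟩
  rw [dist_zero_right] at hk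
  rw [dist_eq_norm] at hn
  calc ‖b.blockProj m n (x k) - x k‖ = ‖(b.proj n (x k) - x k) - b.proj m (x k)‖ := by
        simp only [blockProj, FunLike.coe_sub, Pi.sub_apply, sub_right_comm]
    _ ≤ ‖b.proj n (x k) - x k‖ + ‖b.proj m (x k)‖ := norm_sub_le _ _
    _ < η := by linarith

theorem exists_blockProj_sub_lt_of_tendsto_coord {Y : Type*} [NormedAddCommGroup Y]
    [NormedSpace 𝕜 Y] (bX : SchauderBasis 𝕜 X) (bY : SchauderBasis 𝕜 Y) {x : ℕ → X} {y : ℕ → Y}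
    (hx : ∀ i, Tendsto (fun k => bX.coord i (x k)) atTop (𝓝 0))
    (hy : ∀ i, Tendsto (fun k => bY.coord i (y k)) atTop (𝓝 0)) {η : ℕ → ℝ} (hη : ∀ j, 0 < η j) :
    ∃ k M N : ℕ → ℕ, StrictMono M ∧ StrictMono N ∧ ∀ j,
      ‖bX.blockProj (M j) (M (j + 1)) (x (k j)) - x (k j)‖ < η j ∧
      ‖bY.blockProj (N j) (N (j + 1)) (y (k j)) - y (k j)‖ < η j := by
  have step (j : ℕ) (p : ℕ × ℕ) : ∃ q : ℕ × ℕ, ∃ k, p.1 < q.1 ∧ p.2 < q.2 ∧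
      ‖bX.blockProj p.1 q.1 (x k) - x k‖ < η j ∧ ‖bY.blockProj p.2 q.2 (y k) - y k‖ < η j := by
    obtain ⟨k, ⟨m, hm, hxk⟩, ⟨n, hn, hyk⟩⟩ :=
      ((bX.eventually_exists_norm_blockProj_sub_lt hx p.1 (hη j)).and
        (bY.eventually_exists_norm_blockProj_sub_lt hy p.2 (hη j))).exists
    exact ⟨(m, n), k, hm, hn, hxk, hyk⟩
  choose q k hq using step
  let p : ℕ → ℕ × ℕ := fun j => Nat.rec (0, 0) q j
  have hp (j : ℕ) : p (j + 1) = q j (p j) := rfl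
  refine ⟨fun j => k j (p j), fun j => (p j).1, fun j => (p j).2,
    strictMono_nat_of_lt_succ fun j => ?_, strictMono_nat_of_lt_succ fun j => ?_, fun j => ?_⟩
  all_goals
    have := hq j (p j)
    rw [← hp j] at this
  · exact this.1
  · exact this.2.1
  · exact this.2.2

end Field

section Real

variable {X : Type*} [NormedAddCommGroup X] [NormedSpace ℝ X] (b : SchauderBasis ℝ X)

theorem abs_le_mul_norm_sum_blockProj {K c : ℝ} (hK : ∀ n, ‖b.proj n‖ ≤ K) {M : ℕ → ℕ}
    (hM : StrictMono M) {x : ℕ → X} (hc : 0 < c)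
    (hx : ∀ j, c ≤ ‖b.blockProj (M j) (M (j + 1)) (x j)‖) (a : ℕ → ℝ) (s : Finset ℕ) :
    ∀ j ∈ s, |a j| ≤ 2 * K / c * ‖∑ i ∈ s, a i • b.blockProj (M i) (M (i + 1)) (x i)‖ := by
  intro j hj
  have h := b.norm_smul_blockProj_le hK hM x a hj
  rw [norm_smul, Real.norm_eq_abs] at h
  rw [div_mul_eq_mul_div, le_div_iff₀ hc]
  nlinarith [abs_nonneg (a j), hx j]

theorem isBlockBasic_blockProj {M : ℕ → ℕ} (hM : StrictMono M) (x : ℕ → X) :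
    IsBlockBasic b fun j => b.blockProj (M j) (M (j + 1)) (x j) := by
  classical
  have hunique {n i j : ℕ} (hi : n ∈ Ico (M i) (M (i + 1))) (hj : n ∈ Ico (M j) (M (j + 1))) :
      i = j := by
    rw [mem_Ico] at hi hj
    by_contra hne
    rcases Nat.lt_or_gt_of_ne hne with h | h
    · have : M (i + 1) ≤ M j := hM.monotone h
      omega
    · have : M (j + 1) ≤ M i := hM.monotone h
      omega
  refine ⟨fun j => Ico (M j) (M (j + 1)),
    fun n => if h : ∃ j, n ∈ Ico (M j) (M (j + 1)) then b.coord n (x h.choose) else 0,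
    fun j => nonempty_Ico.2 (hM j.lt_succ_self), fun j m hm k hk => ?_, fun j => ?_⟩
  · exact (mem_Ico.1 hm).2.trans_le (mem_Ico.1 hk).1
  · dsimp only
    rw [b.blockProj_apply (hM.monotone (Nat.le_succ j))]
    refine sum_congr rfl fun n hn => ?_
    have h : ∃ j, n ∈ Ico (M j) (M (j + 1)) := ⟨j, hn⟩
    rw [dif_pos h, hunique h.choose_spec hn]

theorem exists_strictMono_tendsto_coord {x : ℕ → X} {R : ℝ} (hx : ∀ k, ‖x k‖ ≤ R) :
    ∃ φ : ℕ → ℕ, StrictMono φ ∧ ∃ c : ℕ → ℝ,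
      ∀ i, Tendsto (fun k => b.coord i (x (φ k))) atTop (𝓝 (c i)) := by
  obtain ⟨c, -, φ, hφ, hlim⟩ := (isCompact_univ_pi fun i => isCompact_closedBall (0 : ℝ)
    (‖b.coord i‖ * R)).tendsto_subseq (x := fun k i => b.coord i (x k)) fun k i _ => by
      simpa using ((b.coord i).le_opNorm (x k)).trans
        (mul_le_mul_of_nonneg_left (hx k) (norm_nonneg _))
  exact ⟨φ, hφ, c, tendsto_pi_nhds.1 hlim⟩

theorem seqEquiv_blockProj_of_norm_sub_le {K c : ℝ} (hK : ∀ n, ‖b.proj n‖ ≤ K) {M : ℕ → ℕ}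
    (hM : StrictMono M) {x w : ℕ → X} (hc : 0 < c)
    (hx : ∀ j, c ≤ ‖b.blockProj (M j) (M (j + 1)) (x j)‖)
    (hw : ∀ j, ‖b.blockProj (M j) (M (j + 1)) (x j) - w j‖ ≤ c * (1 / 2) ^ (j + 4) / K) :
    SeqEquiv (fun j => b.blockProj (M j) (M (j + 1)) (x j)) w := by
  refine seqEquiv_of_norm_sub_le (b.abs_le_mul_norm_sum_blockProj hK hM hc hx) fun j => ?_
  have hK0 : 0 < K := by
    nlinarith [(hx 0).trans ((b.blockProj _ _).le_opNorm (x 0)), b.norm_blockProj_le hK (M 0) (M 1),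
      norm_nonneg (x 0)]
  calc 2 * K / c * ‖b.blockProj (M j) (M (j + 1)) (x j) - w j‖
      ≤ 2 * K / c * (c * (1 / 2) ^ (j + 4) / K) := by gcongr; exact hw j
    _ = (1 / 2) ^ (j + 3) := by field_simp; ring
    _ ≤ (1 / 2) ^ (j + 2) := pow_le_pow_of_le_one (by norm_num) (by norm_num) (by omega)

end Real

end SchauderBasis

theorem exists_seq_le_dist_of_not_totallyBounded {α : Type*} [PseudoMetricSpace α] {s : Set α}
    (hs : ¬TotallyBounded s) :
    ∃ ε > 0, ∃ x : ℕ → α, (∀ n, x n ∈ s) ∧ ∀ m n, m < n → ε ≤ dist (x m) (x n) := by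
  rw [Metric.totallyBounded_iff] at hs
  push Not at hs
  obtain ⟨ε, hε, hcover⟩ := hs
  refine ⟨ε, hε, exists_seq_of_forall_finset_exists (· ∈ s) (fun x y => ε ≤ dist x y) ?_⟩
  intro t _
  obtain ⟨y, hys, hy⟩ := Set.not_subset.1 (hcover t t.finite_toSet)
  refine ⟨y, hys, fun x hx => not_lt.1 fun h => hy ?_⟩
  exact Set.mem_biUnion hx (by rwa [Metric.mem_ball, dist_comm])

section Operator

variable {X Y : Type*} [NormedAddCommGroup X] [NormedSpace ℝ X]
  [NormedAddCommGroup Y] [NormedSpace ℝ Y]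

theorem exists_separated_of_not_compactOp [CompleteSpace X] {T : Y →L[ℝ] X}
    (hT : ¬CompactOp T) : ∃ ε > 0, ∃ w : ℕ → Y,
      (∀ k, ‖w k‖ ≤ 1) ∧ ∀ m n, m < n → ε ≤ ‖T (w m) - T (w n)‖ := by
  have htb : ¬TotallyBounded (T '' Metric.closedBall 0 1) := fun h =>
    hT (isCompact_iff_totallyBounded_isComplete.2 ⟨h.closure, isClosed_closure.isComplete⟩)
  obtain ⟨ε, hε, x, hx, hsep⟩ := exists_seq_le_dist_of_not_totallyBounded htb
  choose w hw hTw using hx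
  refine ⟨ε, hε, w, fun k => mem_closedBall_zero_iff.1 (hw k), fun m n h => ?_⟩
  simpa only [hTw, dist_eq_norm] using hsep m n h

theorem exists_coord_tendsto_zero (bX : SchauderBasis ℝ X) (bY : SchauderBasis ℝ Y)
    (T : Y →L[ℝ] X) {ε : ℝ} {w : ℕ → Y} (hw : ∀ k, ‖w k‖ ≤ 1)
    (hsep : ∀ m n, m < n → ε ≤ ‖T (w m) - T (w n)‖) :
    ∃ z : ℕ → Y, (∀ k, ‖z k‖ ≤ 2) ∧ (∀ k, ε ≤ ‖T (z k)‖) ∧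
      (∀ i, Tendsto (fun k => bY.coord i (z k)) atTop (𝓝 0)) ∧
      ∀ i, Tendsto (fun k => bX.coord i (T (z k))) atTop (𝓝 0) := by
  obtain ⟨φ, hφ, c, hc⟩ := bY.exists_strictMono_tendsto_coord hw
  obtain ⟨ψ, hψ, d, hd⟩ := bX.exists_strictMono_tendsto_coord (x := fun k => T (w (φ k)))
    fun k => (T.le_opNorm _).trans (mul_le_of_le_one_right (norm_nonneg T) (hw _))
  have hpair {f : ℕ → ℝ} {a : ℝ} (hf : Tendsto f atTop (𝓝 a)) :
      Tendsto (fun k => f (2 * k) - f (2 * k + 1)) atTop (𝓝 0) := by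
    have heven : Tendsto (fun k : ℕ => 2 * k) atTop atTop :=
      tendsto_id.const_mul_atTop' two_pos
    have hodd : Tendsto (fun k : ℕ => 2 * k + 1) atTop atTop :=
      tendsto_atTop_mono (fun k => Nat.le_succ (2 * k)) heven
    simpa using (hf.comp heven).sub (hf.comp hodd)
  refine ⟨fun k => w (φ (ψ (2 * k))) - w (φ (ψ (2 * k + 1))), fun k => ?_, fun k => ?_, fun i => ?_,
    fun i => ?_⟩
  · exact (norm_sub_le _ _).trans (by linarith [hw (φ (ψ (2 * k))), hw (φ (ψ (2 * k + 1)))])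
  · rw [map_sub]
    exact hsep _ _ (hφ.comp hψ (Nat.lt_succ_self _))
  · simpa only [map_sub, Function.comp_apply] using hpair ((hc i).comp hψ.tendsto_atTop)
  · simpa only [map_sub] using hpair (hd i)


theorem exists_blockBasic_seqEquiv_of_coord_tendsto_zero [CompleteSpace X]
    (bX : SchauderBasis ℝ X) (bY : SchauderBasis ℝ Y) (T : Y →L[ℝ] X) {ε : ℝ} (hε : 0 < ε)
    {z : ℕ → Y} (hz : ∀ k, ‖z k‖ ≤ 2) (hTz : ∀ k, ε ≤ ‖T (z k)‖)
    (hY : ∀ i, Tendsto (fun k => bY.coord i (z k)) atTop (𝓝 0))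
    (hX : ∀ i, Tendsto (fun k => bX.coord i (T (z k))) atTop (𝓝 0)) :
    ∃ (u : ℕ → X) (v : ℕ → Y), IsBlockBasic bX u ∧ SemiNormalized u ∧
      IsBlockBasic bY v ∧ SemiNormalized v ∧ SeqEquiv u (fun j => T (v j)) := by
  obtain ⟨C, hC⟩ := bX.exists_norm_proj_le
  set K := max C 1
  have hK (n : ℕ) : ‖bX.proj n‖ ≤ K := (hC n).trans (le_max_left _ _)
  -- with these tolerances the perturbation condition below holds exactly
  set η : ℕ → ℝ := fun j => ε * (1 / 2) ^ (j + 5) / (K * (1 + ‖T‖))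
  have hη (j : ℕ) : 0 < η j := by positivity
  have hηle (j : ℕ) : η j ≤ ε / (2 * (1 + ‖T‖)) := by
    calc η j ≤ ε * (1 / 2) / (1 * (1 + ‖T‖)) := by
          simp only [η]
          gcongr
          · exact pow_le_of_le_one (by norm_num) (by norm_num) (by omega)
          · exact le_max_right C 1
      _ = ε / (2 * (1 + ‖T‖)) := by field_simp
  have hηle' (j : ℕ) : η j ≤ ε / 2 :=
    (hηle j).trans (div_le_div_of_nonneg_left hε.le two_pos (by linarith [norm_nonneg T]))
  obtain ⟨k, M, N, hM, hN, happrox⟩ := bX.exists_blockProj_sub_lt_of_tendsto_coord bY hX hY hη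
  set u := fun j => bX.blockProj (M j) (M (j + 1)) (T (z (k j)))
  set v := fun j => bY.blockProj (N j) (N (j + 1)) (z (k j))
  have hz_ge (k : ℕ) : ε / (1 + ‖T‖) ≤ ‖z k‖ := by
    rw [div_le_iff₀ (by positivity)]
    nlinarith [hTz k, T.le_opNorm (z k), norm_nonneg (z k)]
  have hu_ge (j : ℕ) : ε / 2 ≤ ‖u j‖ := by
    linarith [norm_sub_norm_le (T (z (k j))) (u j), norm_sub_rev (T (z (k j))) (u j),
      (happrox j).1, hTz (k j), hηle' j]
  have huTv (j : ℕ) : ‖u j - T (v j)‖ ≤ (1 + ‖T‖) * η j := by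
    calc ‖u j - T (v j)‖ = ‖(u j - T (z (k j))) - T (v j - z (k j))‖ := by
          rw [map_sub, sub_sub_sub_cancel_right]
      _ ≤ η j + ‖T‖ * η j := (norm_sub_le _ _).trans <| add_le_add (happrox j).1.le
          ((T.le_opNorm _).trans (mul_le_mul_of_nonneg_left (happrox j).2.le (norm_nonneg T)))
      _ = (1 + ‖T‖) * η j := by ring
  refine ⟨u, v, bX.isBlockBasic_blockProj hM _, ?_, bY.isBlockBasic_blockProj hN _, ?_, ?_⟩
  · exact SemiNormalized.of_norm_sub_le (C := 2 * ‖T‖) (half_lt_self hε)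
      (fun j => ⟨hTz (k j), (T.le_opNorm _).trans (by nlinarith [hz (k j), norm_nonneg T])⟩)
      fun j => (happrox j).1.le.trans (hηle' j)
  · exact SemiNormalized.of_norm_sub_le (half_lt_self (by positivity))
      (fun j => ⟨hz_ge (k j), hz (k j)⟩)
      fun j => (happrox j).2.le.trans ((hηle j).trans_eq (by field_simp))
  · refine bX.seqEquiv_blockProj_of_norm_sub_le hK hM (half_pos hε) hu_ge fun j => ?_
    refine (huTv j).trans_eq ?_
    simp only [η]
    field_simp
    ring

end Operator

theorem statement1 {X Y : Type*} [NormedAddCommGroup X] [NormedSpace ℝ X] [CompleteSpace X]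
    [NormedAddCommGroup Y] [NormedSpace ℝ Y] [CompleteSpace Y]
    (T : Y →L[ℝ] X) (hT : ¬ CompactOp T)
    (e : ℕ → X) (he : IsSchauderBasis e) (y : ℕ → Y) (hy : IsSchauderBasis y) :
    ∃ (u : ℕ → X) (v : ℕ → Y), IsBlockBasic e u ∧ SemiNormalized u ∧
      IsBlockBasic y v ∧ SemiNormalized v ∧ SeqEquiv u (fun j => T (v j)) := by
  obtain ⟨ε, hε, w, hw, hsep⟩ := exists_separated_of_not_compactOp hT
  obtain ⟨z, hz, hTz, hY, hX⟩ :=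
    exists_coord_tendsto_zero he.toSchauderBasis hy.toSchauderBasis T hw hsep
  exact exists_blockBasic_seqEquiv_of_coord_tendsto_zero he.toSchauderBasis hy.toSchauderBasis T
    hε hz hTz hY hX
end

section
/- Let X be a real Banach space with an unconditional basis (e_n)_{n∈ℕ} satisfying a lower 1-estimate, let Y be a real Banach space, and let T : Y → X be a bounded linear operator that is not compact. Then there exist a semi-normalized sequence (v_j)_{j∈ℕ} in Y and a sequence (u_j)_{j∈ℕ} in X disjointly finitely supported with respect to (e_n) such that (u_j), (v_j) and (T v_j) are each equivalent to the canonical basis of ℓ_1. -/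
open scoped BigOperators

/-!
A lower 1-estimate makes `‖x‖` equivalent to the `ℓ¹`-type norm `∑ₙ ‖aₙ(x) eₙ‖` of its expansion
(the other inequality is the triangle inequality), so `X` is essentially `ℓ¹`, and a normalized
basis `eₙ / ‖eₙ‖` is already equivalent to the unit vector basis of `ℓ¹`.

A non-compact `T` maps the unit ball onto a set that is not totally bounded, which gives an
`ε`-separated sequence `T yₖ`. Gliding hump: finitely many coordinates of a bounded sequence admit
a nearly equal pair, and the coefficient series converge absolutely, so one finds differences
`vᵢ = y_{jᵢ} - y_{kᵢ}` whose images carry all but `ε/4` of their `ℓ¹`-mass on pairwise disjoint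
blocks `Bᵢ`. Then each `T vᵢ` has mass at least `3ε/4` on its own block while all cross terms cost
at most `ε/4 ∑ |cᵢ|`, so `C ‖∑ cᵢ T vᵢ‖ ≥ ε/2 ∑ |cᵢ|`. Since `‖vᵢ‖ ≤ 2`, both `(vᵢ)` and `(T vᵢ)` are
equivalent to the `ℓ¹` basis.
-/

open Finset Filter Topology Bornology Function

theorem Seminorm.sub_mul_sum_abs_le_sum_apply_sum_smul {ι E : Type*} [DecidableEq ι]
    [AddCommGroup E] [Module ℝ E] (p : ι → Seminorm ℝ E) (w : ι → E) (s : Finset ι)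
    {α β : ℝ} (hα : ∀ i ∈ s, α ≤ p i (w i)) (hβ : ∀ j ∈ s, ∑ i ∈ s.erase j, p i (w j) ≤ β)
    (c : ι → ℝ) :
    (α - β) * ∑ i ∈ s, |c i| ≤ ∑ i ∈ s, p i (∑ j ∈ s, c j • w j) := by
  have hrow : ∀ i ∈ s, |c i| * p i (w i) - ∑ j ∈ s.erase i, |c j| * p i (w j) ≤
      p i (∑ j ∈ s, c j • w j) := by
    intro i hi
    have hrest : p i (∑ j ∈ s.erase i, c j • w j) ≤ ∑ j ∈ s.erase i, |c j| * p i (w j) := by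
      refine (le_sum_of_subadditive (p i) (map_zero _).le (map_add_le_add _) _ _).trans ?_
      simp only [map_smul_eq_mul, Real.norm_eq_abs, le_refl]
    have htri : |c i| * p i (w i) ≤
        p i (∑ j ∈ s, c j • w j) + p i (∑ j ∈ s.erase i, c j • w j) :=
      calc |c i| * p i (w i) = p i ((∑ j ∈ s, c j • w j) - ∑ j ∈ s.erase i, c j • w j) := by
            rw [← add_sum_erase s _ hi, add_sub_cancel_right, map_smul_eq_mul,
              Real.norm_eq_abs]
        _ ≤ _ := map_sub_le_add _ _ _
    linarith
  have hswap : ∑ i ∈ s, ∑ j ∈ s.erase i, |c j| * p i (w j) =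
      ∑ j ∈ s, |c j| * ∑ i ∈ s.erase j, p i (w j) := by
    simp_rw [mul_sum]
    exact sum_comm' fun i j => by simp only [mem_erase]; tauto
  have hdiag : α * ∑ i ∈ s, |c i| ≤ ∑ i ∈ s, |c i| * p i (w i) := by
    rw [mul_sum]
    exact sum_le_sum fun i hi => by
      simpa only [mul_comm α] using mul_le_mul_of_nonneg_left (hα i hi) (abs_nonneg (c i))
  have hcross : ∑ j ∈ s, |c j| * ∑ i ∈ s.erase j, p i (w j) ≤ β * ∑ i ∈ s, |c i| := by
    rw [mul_sum]
    exact sum_le_sum fun j hj => by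
      simpa only [mul_comm β] using mul_le_mul_of_nonneg_left (hβ j hj) (abs_nonneg (c j))
  have hsum := sum_le_sum hrow
  rw [sum_sub_distrib, hswap] at hsum
  linarith

theorem Metric.exists_separated_seq_of_not_totallyBounded {α : Type*} [PseudoMetricSpace α]
    {s : Set α} (hs : ¬ TotallyBounded s) :
    ∃ ε > 0, ∃ x : ℕ → α, (∀ n, x n ∈ s) ∧ Pairwise fun m n => ε ≤ dist (x m) (x n) := by
  rw [Metric.totallyBounded_iff] at hs
  push Not at hs
  obtain ⟨ε, hε, hcover⟩ := hs
  have hnext : ∀ t : Set α, t.Finite → ∃ c, c ∈ s ∧ ∀ y ∈ t, ε ≤ dist c y := by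
    intro t ht
    obtain ⟨c, hcs, hc⟩ := Set.not_subset.1 (hcover t ht)
    simp only [Set.mem_iUnion, Metric.mem_ball, not_exists, not_lt] at hc
    exact ⟨c, hcs, hc⟩
  obtain ⟨x, hx⟩ := Set.seq_of_forall_finite_exists hnext
  refine ⟨ε, hε, x, fun n => (hx n).1, fun m n hmn => ?_⟩
  rcases hmn.lt_or_gt with h | h
  · rw [dist_comm]; exact (hx n).2 _ ⟨m, h, rfl⟩
  · exact (hx m).2 _ ⟨n, h, rfl⟩

theorem exists_ne_dist_lt_of_isBounded {α : Type*} [PseudoMetricSpace α] [ProperSpace α]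
    {x : ℕ → α} (hx : IsBounded (Set.range x)) {δ : ℝ} (hδ : 0 < δ) :
    ∃ j k, j ≠ k ∧ dist (x j) (x k) < δ := by
  obtain ⟨_, _, φ, hφ, hlim⟩ := tendsto_subseq_of_bounded hx fun n => Set.mem_range_self n
  obtain ⟨N, hN⟩ := Metric.cauchySeq_iff'.1 hlim.cauchySeq δ hδ
  exact ⟨φ (N + 1), φ N, (hφ N.lt_succ_self).ne', hN (N + 1) N.le_succ⟩

theorem not_totallyBounded_image_closedBall_of_not_compactOp {X Y : Type*}
    [NormedAddCommGroup X] [NormedSpace ℝ X] [CompleteSpace X]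
    [NormedAddCommGroup Y] [NormedSpace ℝ Y] {T : Y →L[ℝ] X} (hT : ¬ CompactOp T) :
    ¬ TotallyBounded (T '' Metric.closedBall 0 1) := fun h =>
  hT (isCompact_iff_totallyBounded_isComplete.2 ⟨h.closure, isClosed_closure.isComplete⟩)

theorem exists_separated_image_of_not_compactOp {X Y : Type*}
    [NormedAddCommGroup X] [NormedSpace ℝ X] [CompleteSpace X]
    [NormedAddCommGroup Y] [NormedSpace ℝ Y] {T : Y →L[ℝ] X} (hT : ¬ CompactOp T) :
    ∃ ε > 0, ∃ y : ℕ → Y, (∀ n, ‖y n‖ ≤ 1) ∧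
      Pairwise fun m n => ε ≤ ‖T (y m) - T (y n)‖ := by
  obtain ⟨ε, hε, x, hx, hsep⟩ := Metric.exists_separated_seq_of_not_totallyBounded
    (not_totallyBounded_image_closedBall_of_not_compactOp hT)
  choose y hy hTy using hx
  refine ⟨ε, hε, y, fun n => by simpa using hy n, fun m n hmn => ?_⟩
  simpa only [hTy, dist_eq_norm] using hsep hmn

theorem equivCanonLq_one_of_mul_sum_abs_le {X : Type*} [NormedAddCommGroup X]
    [NormedSpace ℝ X] {u : ℕ → X} {c K : ℝ} (hc : 0 < c) (hK : ∀ j, ‖u j‖ ≤ K)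
    (hlow : ∀ (a : ℕ → ℝ) (s : Finset ℕ), c * ∑ j ∈ s, |a j| ≤ ‖∑ j ∈ s, a j • u j‖) :
    EquivCanonLq u 1 := by
  set M := max c⁻¹ (max K 1)
  have hcM : c⁻¹ ≤ M := le_max_left _ _
  have hKM : K ≤ M := le_max_of_le_right (le_max_left _ _)
  have hM : 1 ≤ M := le_max_of_le_right (le_max_right _ _)
  refine ⟨M, hM, fun a s => ?_⟩
  simp only [Real.rpow_one, div_one]
  constructor
  · rw [inv_mul_le_iff₀ (by linarith)]
    calc ∑ j ∈ s, |a j| = c⁻¹ * (c * ∑ j ∈ s, |a j|) := by field_simp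
      _ ≤ M * ‖∑ j ∈ s, a j • u j‖ := by gcongr; exact hlow a s
  · calc ‖∑ j ∈ s, a j • u j‖ ≤ ∑ j ∈ s, |a j| * K := by
          refine (norm_sum_le _ _).trans (sum_le_sum fun j _ => ?_)
          rw [norm_smul, Real.norm_eq_abs]
          exact mul_le_mul_of_nonneg_left (hK j) (abs_nonneg _)
      _ ≤ ∑ j ∈ s, |a j| * M := by gcongr
      _ = M * ∑ j ∈ s, |a j| := by rw [← sum_mul, mul_comm]

theorem mul_sum_abs_le_norm_sum_of_map {X Y : Type*} [NormedAddCommGroup X] [NormedSpace ℝ X]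
    [NormedAddCommGroup Y] [NormedSpace ℝ Y] (T : Y →L[ℝ] X) {v : ℕ → Y} {c : ℝ}
    (h : ∀ (a : ℕ → ℝ) (s : Finset ℕ), c * ∑ j ∈ s, |a j| ≤ ‖∑ j ∈ s, a j • T (v j)‖)
    (a : ℕ → ℝ) (s : Finset ℕ) :
    c / (‖T‖ + 1) * ∑ j ∈ s, |a j| ≤ ‖∑ j ∈ s, a j • v j‖ := by
  have hT : 0 < ‖T‖ + 1 := by positivity
  rw [div_mul_eq_mul_div, div_le_iff₀ hT]
  calc c * ∑ j ∈ s, |a j| ≤ ‖T (∑ j ∈ s, a j • v j)‖ := by simpa using h a s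
    _ ≤ ‖T‖ * ‖∑ j ∈ s, a j • v j‖ := T.le_opNorm _
    _ ≤ ‖∑ j ∈ s, a j • v j‖ * (‖T‖ + 1) := by nlinarith [norm_nonneg (∑ j ∈ s, a j • v j)]

theorem Finset.sum_equivFin_symm {α M : Type*} [AddCommMonoid M] (s : Finset α) (f : α → M) :
    ∑ i, f (s.equivFin.symm i) = ∑ a ∈ s, f a :=
  (s.equivFin.symm.sum_comp fun a : s => f a).trans (s.sum_coe_sort f)

section Basis

variable {X : Type*} [NormedAddCommGroup X] [NormedSpace ℝ X] {e : ℕ → X}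

def HasLowerL1Bound (e : ℕ → X) (C : ℝ) : Prop :=
  ∀ (s : Finset ℕ) (c : ℕ → ℝ), ∑ n ∈ s, ‖c n • e n‖ ≤ C * ‖∑ n ∈ s, c n • e n‖

theorem LowerEstimate.exists_hasLowerL1Bound (hlow : LowerEstimate e 1) :
    ∃ C > 0, HasLowerL1Bound e C := by
  obtain ⟨C, hC, hest⟩ := hlow
  refine ⟨C, hC, fun s c => ?_⟩
  have h := hest s.card (fun i => c (s.equivFin.symm i) • e (s.equivFin.symm i))
    (fun i => {(s.equivFin.symm i : ℕ)})
    (fun i j hij => disjoint_singleton.2 fun h =>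
      hij (s.equivFin.symm.injective (Subtype.ext h)))
    (fun i => Submodule.smul_mem _ _ (Submodule.subset_span ⟨_, by simp, rfl⟩))
  simp only [Real.rpow_one, div_one] at h
  rwa [sum_equivFin_symm s fun n => ‖c n • e n‖, sum_equivFin_symm s fun n => c n • e n] at h

theorem disjSupported_smul_self (c : ℕ → ℝ) : DisjSupported e fun n => c n • e n :=
  ⟨fun n => {n}, fun _ _ h => disjoint_singleton.2 h,
    fun n => Submodule.smul_mem _ _ (Submodule.subset_span ⟨n, by simp, rfl⟩)⟩

theorem HasLowerL1Bound.equivCanonLq_one_normalize {C : ℝ} (hC : HasLowerL1Bound e C)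
    (hCpos : 0 < C) (he : ∀ n, e n ≠ 0) : EquivCanonLq (fun n => ‖e n‖⁻¹ • e n) 1 := by
  have hunit : ∀ n, ‖(‖e n‖⁻¹ • e n : X)‖ = 1 := fun n => by
    rw [norm_smul, norm_inv, norm_norm, inv_mul_cancel₀ (norm_ne_zero_iff.2 (he n))]
  refine equivCanonLq_one_of_mul_sum_abs_le (inv_pos.2 hCpos) (fun n => (hunit n).le) fun a s => ?_
  have h := hC s fun n => a n * ‖e n‖⁻¹
  simp only [mul_smul, norm_smul, hunit, mul_one, Real.norm_eq_abs] at h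
  rwa [inv_mul_le_iff₀ hCpos]

namespace IsUncondBasis

variable (he : IsUncondBasis e)

noncomputable def coeff : X →ₗ[ℝ] ℕ → ℝ where
  toFun x := (he.2 x).exists.choose
  map_add' x y := (he.2 (x + y)).unique (he.2 (x + y)).exists.choose_spec <| by
    simpa only [Pi.add_apply, add_smul] using
      (he.2 x).exists.choose_spec.add (he.2 y).exists.choose_spec
  map_smul' r x := (he.2 (r • x)).unique (he.2 (r • x)).exists.choose_spec <| by
    simpa only [Pi.smul_apply, smul_eq_mul, RingHom.id_apply, mul_smul] using
      (he.2 x).exists.choose_spec.const_smul r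

theorem hasSum_coeff (x : X) : HasSum (fun n => he.coeff x n • e n) x :=
  (he.2 x).exists.choose_spec

/-- The part `∑ n ∈ B, ‖aₙ(x) • eₙ‖` of the `ℓ¹`-type norm of `x` carried by the block `B`. -/
noncomputable def blockL1 (B : Finset ℕ) : Seminorm ℝ X :=
  ∑ n ∈ B, (normSeminorm ℝ X).comp ((LinearMap.proj n ∘ₗ he.coeff).smulRight (e n))

theorem blockL1_apply (B : Finset ℕ) (x : X) :
    he.blockL1 B x = ∑ n ∈ B, ‖he.coeff x n • e n‖ := by
  simp [blockL1]

theorem blockL1_mono {B B' : Finset ℕ} (h : B ⊆ B') (x : X) :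
    he.blockL1 B x ≤ he.blockL1 B' x := by
  simp only [blockL1_apply]
  exact sum_le_sum_of_subset_of_nonneg h fun _ _ _ => norm_nonneg _

theorem blockL1_biUnion {ι : Type*} [DecidableEq ι] {s : Finset ι} {B : ι → Finset ℕ}
    (hB : (s : Set ι).PairwiseDisjoint B) (x : X) :
    he.blockL1 (s.biUnion B) x = ∑ i ∈ s, he.blockL1 (B i) x := by
  simp only [blockL1_apply]
  exact sum_biUnion hB

theorem blockL1_eq_add_filter (B : Finset ℕ) (p : ℕ → Prop) [DecidablePred p] (x : X) :
    he.blockL1 B x = he.blockL1 (B.filter p) x + he.blockL1 (B.filter fun n => ¬ p n) x := by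
  simp only [blockL1_apply]
  exact (sum_filter_add_sum_filter_not B p _).symm

section LowerBound

variable {C : ℝ}

theorem blockL1_le (hC : HasLowerL1Bound e C) (B : Finset ℕ) (x : X) :
    he.blockL1 B x ≤ C * ‖x‖ := by
  have hB : ∀ t, B ⊆ t → he.blockL1 B x ≤ C * ‖∑ n ∈ t, he.coeff x n • e n‖ := fun t ht =>
    (he.blockL1_mono ht x).trans (by rw [blockL1_apply]; exact hC t _)
  exact ge_of_tendsto ((he.hasSum_coeff x).norm.const_mul C) ((eventually_ge_atTop B).mono hB)

theorem summable_norm_coeff_smul (hC : HasLowerL1Bound e C) (x : X) :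
    Summable fun n => ‖he.coeff x n • e n‖ :=
  summable_of_sum_le (fun _ => norm_nonneg _) fun t => by
    simpa only [blockL1_apply] using he.blockL1_le hC t x

theorem norm_le_blockL1_add (hC : HasLowerL1Bound e C) {x : X} {B : Finset ℕ} {δ : ℝ}
    (hoff : ∀ s, Disjoint s B → he.blockL1 s x ≤ δ) : ‖x‖ ≤ he.blockL1 B x + δ := by
  have hsum := he.summable_norm_coeff_smul hC x
  calc ‖x‖ = ‖∑' n, he.coeff x n • e n‖ := by rw [(he.hasSum_coeff x).tsum_eq]
    _ ≤ ∑' n, ‖he.coeff x n • e n‖ := norm_tsum_le_tsum_norm hsum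
    _ ≤ he.blockL1 B x + δ := hsum.tsum_le_of_sum_le fun t => by
      rw [← blockL1_apply, he.blockL1_eq_add_filter t (· ∈ B)]
      exact add_le_add (he.blockL1_mono (fun n hn => (mem_filter.1 hn).2) x)
        (hoff _ (disjoint_left.2 fun n hn => (mem_filter.1 hn).2))

theorem exists_forall_disjoint_range_blockL1_le (hC : HasLowerL1Bound e C) (x : X) {δ : ℝ}
    (hδ : 0 < δ) : ∃ M, ∀ s, Disjoint s (range M) → he.blockL1 s x ≤ δ := by
  obtain ⟨t, ht⟩ := (he.summable_norm_coeff_smul hC x).vanishing (Iio_mem_nhds hδ)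
  refine ⟨t.sup id + 1, fun s hs => ?_⟩
  have hts : Disjoint s t := hs.mono_right fun n hn =>
    mem_range.2 (Nat.lt_succ_of_le (le_sup (f := id) hn))
  rw [blockL1_apply]
  exact (ht s hts).le

theorem exists_ne_blockL1_range_sub_le (hC : HasLowerL1Bound e C) {x : ℕ → X}
    (hx : IsBounded (Set.range x)) (N : ℕ) {δ : ℝ} (hδ : 0 < δ) :
    ∃ j k, j ≠ k ∧ he.blockL1 (range N) (x j - x k) ≤ δ := by
  let z : ℕ → Fin N → ℝ := fun k n => ‖e n‖ * he.coeff (x k) n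
  have hz : IsBounded (Set.range z) := by
    obtain ⟨R, hR⟩ := hx.exists_norm_le
    refine isBounded_iff_forall_norm_le.2 ⟨max (|C| * R) 0, ?_⟩
    rintro _ ⟨k, rfl⟩
    refine (pi_norm_le_iff_of_nonneg (le_max_right _ _)).2 fun n => le_max_of_le_left ?_
    calc ‖z k n‖ = he.blockL1 {(n : ℕ)} (x k) := by
          simp [z, blockL1_apply, norm_smul, mul_comm]
      _ ≤ C * ‖x k‖ := he.blockL1_le hC _ _
      _ ≤ |C| * R := mul_le_mul (le_abs_self C) (hR _ ⟨k, rfl⟩) (norm_nonneg _) (abs_nonneg _)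
  obtain ⟨j, k, hjk, hd⟩ := exists_ne_dist_lt_of_isBounded hz
    (by positivity : 0 < δ / (N + 1))
  refine ⟨j, k, hjk, ?_⟩
  calc he.blockL1 (range N) (x j - x k) = ∑ n : Fin N, ‖z j n - z k n‖ := by
        rw [blockL1_apply, ← Fin.sum_univ_eq_sum_range]
        refine sum_congr rfl fun n _ => ?_
        simp only [z, map_sub, Pi.sub_apply, norm_smul, ← mul_sub, norm_mul, norm_norm,
          mul_comm]
    _ ≤ ∑ _n : Fin N, dist (z j) (z k) := sum_le_sum fun n _ => by
        rw [dist_eq_norm]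
        exact norm_le_pi_norm (z j - z k) n
    _ ≤ (N + 1) * (δ / (N + 1)) := by
        rw [sum_const, card_univ, Fintype.card_fin, nsmul_eq_mul]
        gcongr
        · linarith
    _ = δ := by field_simp

theorem exists_ne_blockL1_sub_le_of_disjoint_Ico (hC : HasLowerL1Bound e C) {x : ℕ → X}
    (hx : IsBounded (Set.range x)) {δ : ℝ} (hδ : 0 < δ) (N : ℕ) :
    ∃ j k N', j ≠ k ∧ N ≤ N' ∧ ∀ s, Disjoint s (Ico N N') → he.blockL1 s (x j - x k) ≤ δ := by
  obtain ⟨j, k, hjk, hhead⟩ := he.exists_ne_blockL1_range_sub_le hC hx N (half_pos hδ)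
  obtain ⟨M, htail⟩ := he.exists_forall_disjoint_range_blockL1_le hC (x j - x k) (half_pos hδ)
  refine ⟨j, k, max N M, hjk, le_max_left _ _, fun s hs => ?_⟩
  have hfar : Disjoint (s.filter fun n => ¬ n < N) (range M) := by
    refine disjoint_left.2 fun n hn hnM => ?_
    have hnI := disjoint_left.1 hs (mem_filter.1 hn).1
    simp only [mem_filter, mem_range, mem_Ico] at hn hnM hnI
    omega
  calc he.blockL1 s (x j - x k)
      = he.blockL1 (s.filter (· < N)) (x j - x k) +
          he.blockL1 (s.filter fun n => ¬ n < N) (x j - x k) :=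
        he.blockL1_eq_add_filter s _ _
    _ ≤ δ / 2 + δ / 2 :=
        add_le_add ((he.blockL1_mono (fun n hn => mem_range.2 (mem_filter.1 hn).2) _).trans hhead)
          (htail _ hfar)
    _ = δ := add_halves δ

theorem exists_gliding_hump (hC : HasLowerL1Bound e C) {x : ℕ → X}
    (hx : IsBounded (Set.range x)) {δ : ℝ} (hδ : 0 < δ) :
    ∃ (j k : ℕ → ℕ) (B : ℕ → Finset ℕ), (∀ i, j i ≠ k i) ∧ Pairwise (Disjoint on B) ∧
      ∀ i s, Disjoint s (B i) → he.blockL1 s (x (j i) - x (k i)) ≤ δ := by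
  choose j k N' hjk hle hoff using he.exists_ne_blockL1_sub_le_of_disjoint_Ico hC hx hδ
  let b : ℕ → ℕ := fun i => N'^[i] 0
  have hb_succ : ∀ i, b (i + 1) = N' (b i) := fun i => iterate_succ_apply' N' i 0
  have hb : Monotone b := monotone_nat_of_le_succ fun i => (hle _).trans_eq (hb_succ i).symm
  refine ⟨fun i => j (b i), fun i => k (b i), fun i => Ico (b i) (b (i + 1)),
    fun i => hjk _, fun i i' hii' => ?_, fun i s hs => hoff _ s (by rwa [← hb_succ])⟩
  rw [onFun, ← disjoint_coe, coe_Ico, coe_Ico]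
  exact hb.pairwise_disjoint_on_Ico_succ hii'

theorem mul_sum_abs_le_norm_sum (hC : HasLowerL1Bound e C) {w : ℕ → X} {B : ℕ → Finset ℕ}
    (hB : Pairwise (Disjoint on B)) {ε : ℝ} (hw : ∀ i, ε ≤ ‖w i‖)
    (hoff : ∀ i s, Disjoint s (B i) → he.blockL1 s (w i) ≤ ε / 4) (c : ℕ → ℝ) (s : Finset ℕ) :
    ε / 2 * ∑ i ∈ s, |c i| ≤ C * ‖∑ i ∈ s, c i • w i‖ := by
  have hmain : ∀ i ∈ s, 3 * (ε / 4) ≤ he.blockL1 (B i) (w i) := fun i _ => by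
    linarith [hw i, he.norm_le_blockL1_add hC (hoff i)]
  have hcross : ∀ j ∈ s, ∑ i ∈ s.erase j, he.blockL1 (B i) (w j) ≤ ε / 4 := fun j _ => by
    rw [← he.blockL1_biUnion (hB.set_pairwise _)]
    exact hoff j _ ((disjoint_biUnion_left _ _ _).2 fun i hi => hB (ne_of_mem_erase hi))
  calc ε / 2 * ∑ i ∈ s, |c i| = (3 * (ε / 4) - ε / 4) * ∑ i ∈ s, |c i| := by ring
    _ ≤ ∑ i ∈ s, he.blockL1 (B i) (∑ j ∈ s, c j • w j) :=
        Seminorm.sub_mul_sum_abs_le_sum_apply_sum_smul (fun i => he.blockL1 (B i)) w s hmain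
          hcross c
    _ = he.blockL1 (s.biUnion B) (∑ j ∈ s, c j • w j) :=
        (he.blockL1_biUnion (hB.set_pairwise _) _).symm
    _ ≤ C * ‖∑ i ∈ s, c i • w i‖ := he.blockL1_le hC _ _

end LowerBound

end IsUncondBasis

end Basis

theorem statement4_general {X Y : Type*} [NormedAddCommGroup X] [NormedSpace ℝ X] [CompleteSpace X]
    [NormedAddCommGroup Y] [NormedSpace ℝ Y]
    (e : ℕ → X) (he : IsUncondBasis e) (hlow : LowerEstimate e 1)
    (T : Y →L[ℝ] X) (hT : ¬ CompactOp T) :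
    ∃ (v : ℕ → Y) (u : ℕ → X), SemiNormalized v ∧ DisjSupported e u ∧
      EquivCanonLq u 1 ∧ EquivCanonLq v 1 ∧ EquivCanonLq (fun j => T (v j)) 1 := by
  obtain ⟨C, hCpos, hC⟩ := hlow.exists_hasLowerL1Bound
  obtain ⟨ε, hε, y, hy, hsep⟩ := exists_separated_image_of_not_compactOp hT
  have hTy : IsBounded (Set.range fun n => T (y n)) :=
    isBounded_iff_forall_norm_le.2 ⟨‖T‖, by rintro _ ⟨n, rfl⟩; simpa using T.le_opNorm_of_le (hy n)⟩
  obtain ⟨j, k, B, hjk, hB, hoff⟩ := he.exists_gliding_hump hC hTy (by positivity : 0 < ε / 4)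
  set v : ℕ → Y := fun i => y (j i) - y (k i)
  have hv : ∀ i, ‖v i‖ ≤ 2 := fun i => (norm_sub_le _ _).trans (by linarith [hy (j i), hy (k i)])
  have hTv : ∀ i, ε ≤ ‖T (v i)‖ := fun i => by simpa only [v, map_sub] using hsep (hjk i)
  have hTv_l1 : ∀ (a : ℕ → ℝ) (s : Finset ℕ), ε / 2 / C * ∑ i ∈ s, |a i| ≤ ‖∑ i ∈ s, a i • T (v i)‖ :=
    fun a s => by
      rw [div_mul_eq_mul_div, div_le_iff₀' hCpos]
      exact he.mul_sum_abs_le_norm_sum hC hB hTv (by simpa only [v, map_sub] using hoff) a s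
  refine ⟨v, fun n => ‖e n‖⁻¹ • e n, ⟨ε / (‖T‖ + 1), 2, by positivity, fun i => ⟨?_, hv i⟩⟩,
    disjSupported_smul_self _, hC.equivCanonLq_one_normalize hCpos he.1,
    equivCanonLq_one_of_mul_sum_abs_le (by positivity) hv (mul_sum_abs_le_norm_sum_of_map T hTv_l1),
    equivCanonLq_one_of_mul_sum_abs_le (by positivity) (fun i => T.le_opNorm_of_le (hv i)) hTv_l1⟩
  rw [div_le_iff₀ (by positivity)]
  nlinarith [hTv i, T.le_opNorm (v i), norm_nonneg (v i)]

theorem statement4 {X Y : Type*} [NormedAddCommGroup X] [NormedSpace ℝ X] [CompleteSpace X]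
    [NormedAddCommGroup Y] [NormedSpace ℝ Y] [CompleteSpace Y]
    (e : ℕ → X) (he : IsUncondBasis e) (hlow : LowerEstimate e 1)
    (T : Y →L[ℝ] X) (hT : ¬ CompactOp T) :
    ∃ (v : ℕ → Y) (u : ℕ → X), SemiNormalized v ∧ DisjSupported e u ∧
      EquivCanonLq u 1 ∧ EquivCanonLq v 1 ∧ EquivCanonLq (fun j => T (v j)) 1 :=
  statement4_general e he hlow T hT
end
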